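/- arXiv:1012.3405 — 4 statements merged into one kernel-verified Lean document; each statement's English description precedes it below -/
import Mathlib

section
/- With V, M, f as above, let x ∈ V and Y ⊆ V be such that every y ∈ Y satisfies y ◁ x, and such that for every m ∈ M there exists y ∈ Y with f(x,y) > m. Then x is the least upper bound of Y in (V, ◁): x is an upper bound, and any z with y ◁ z for all y ∈ Y satisfies x ◁ z or x = z. -/
lemma le_of_eq_min_of_lt_of_lt {V M : Type*} [LT V] [LinearOrder M] {f : V → V → M}
    (hmin : ∀ x y z : V, x < y → y < z → f x z = min (f x y) (f y z))
    {x y z : V} (hxy : x < y) (hyz : y < z) : f x z ≤ f y z := by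
  rw [hmin x y z hxy hyz]
  exact min_le_right _ _

theorem stmt_7 {V M : Type*} [LinearOrder V] [LinearOrder M]
    (f : V → V → M)
    (hsymm : ∀ x y : V, f x y = f y x)
    (hmin : ∀ x y z : V, x < y → y < z → f x z = min (f x y) (f y z))
    (x : V) (Y : Set V)
    (hY : ∀ y ∈ Y, y < x)
    (hcof : ∀ m : M, ∃ y ∈ Y, m < f x y) :
    (∀ y ∈ Y, y ≤ x) ∧ ∀ z : V, (∀ y ∈ Y, y < z) → x ≤ z := by
  refine ⟨fun y hy => (hY y hy).le, fun z hz => not_lt.1 fun hzx => ?_⟩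
  obtain ⟨y, hy, hzy⟩ := hcof (f x z)
  have hyz : f y x ≤ f z x := le_of_eq_min_of_lt_of_lt hmin (hz y hy) hzx
  rw [hsymm y x, hsymm z x] at hyz
  exact hzy.not_ge hyz
end

section
/- With V, M, f as above, assume additionally the density property: for every a ∈ V and every m ∈ M there exists b ∈ V with b ◁ a and f(a,b) = m. Fix a ∈ V and suppose S ⊆ M is cofinal in M (i.e., for every m ∈ M there is s ∈ S with m ≤ s). For each s ∈ S choose b_s ◁ a with f(a,b_s) = s. Then the set {b_s : s ∈ S} is cofinal in {c ∈ V : c ◁ a}: for every c ◁ a there exists s ∈ S with c ◁ b_s or c = b_s. -/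
section MinRule

variable {V M : Type*} [LinearOrder V] [LinearOrder M] {f : V → V → M}

theorem apply_le_apply_of_lt_of_lt
    (hmin : ∀ x y z : V, x < y → y < z → f x z = min (f x y) (f y z))
    {x y z : V} (hxy : x < y) (hyz : y < z) : f x z ≤ f y z :=
  (hmin x y z hxy hyz).trans_le (min_le_right _ _)

theorem le_of_apply_lt_apply (hsymm : ∀ x y : V, f x y = f y x)
    (hmin : ∀ x y z : V, x < y → y < z → f x z = min (f x y) (f y z))
    {a b c : V} (hca : c < a) (h : f a c < f a b) : c ≤ b := by
  by_contra! hbc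
  have hle := apply_le_apply_of_lt_of_lt hmin hbc hca
  rw [hsymm b a, hsymm c a] at hle
  exact hle.not_gt h

end MinRule

theorem stmt_8_general {V M : Type*} [LinearOrder V] [LinearOrder M]
    (f : V → V → M)
    (hsymm : ∀ x y : V, f x y = f y x)
    (hmin : ∀ x y z : V, x < y → y < z → f x z = min (f x y) (f y z))
    (hnomax : ∀ m : M, ∃ m' : M, m < m')
    (a : V) (S : Set M)
    (hScof : ∀ m : M, ∃ s ∈ S, m ≤ s)
    (b : M → V)
    (hb : ∀ s ∈ S, b s < a ∧ f a (b s) = s) :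
    ∀ c : V, c < a → ∃ s ∈ S, c ≤ b s := by
  intro c hca
  obtain ⟨m, hm⟩ := hnomax (f a c)
  obtain ⟨s, hsS, hms⟩ := hScof m
  refine ⟨s, hsS, le_of_apply_lt_apply hsymm hmin hca ?_⟩
  rw [(hb s hsS).2]
  exact hm.trans_le hms

theorem stmt_8 {V M : Type*} [LinearOrder V] [LinearOrder M]
    (f : V → V → M)
    (hsymm : ∀ x y : V, f x y = f y x)
    (hmin : ∀ x y z : V, x < y → y < z → f x z = min (f x y) (f y z))
    (hnomax : ∀ m : M, ∃ m' : M, m < m')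
    (hdense : ∀ a : V, ∀ m : M, ∃ b : V, b < a ∧ f a b = m)
    (a : V) (S : Set M)
    (hScof : ∀ m : M, ∃ s ∈ S, m ≤ s)
    (b : M → V)
    (hb : ∀ s ∈ S, b s < a ∧ f a (b s) = s) :
    ∀ c : V, c < a → ∃ s ∈ S, c ≤ b s :=
  stmt_8_general f hsymm hmin hnomax a S hScof b hb
end

section
/- Let μ be an ordinal and λ an ordinal with λ ≥ 2, and order the functions μ → λ lexicographically. If x <_lex z, then there exists a function y : μ → λ which is eventually zero (y(β) = 0 for all β greater than some α < μ) such that x <_lex y and y ≤_lex z. -/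
/-! Truncate `z` after the first index `α` where `x` and `z` differ, i.e. keep `z` on `Iic α` and
put `0` everywhere beyond. The truncation still beats `x` at `α`, and it lies pointwise below
`z`, hence lexicographically below `z` since the index order is well founded. -/

open Set

theorem Pi.lt_toLex_piecewise_Iic {ι : Type*} {β : ι → Type*} [Preorder ι]
    [DecidableLE ι] [∀ i, LT (β i)] {x z b : ∀ i, β i} {α : ι}
    (hagree : ∀ j < α, x j = z j) (hlt : x α < z α) :
    toLex x < toLex ((Iic α).piecewise z b) :=
  ⟨α, fun j hj => (hagree j hj).trans (piecewise_eq_of_mem (Iic α) z b hj.le).symm,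
    show x α < (Iic α).piecewise z b α by rwa [piecewise_eq_of_mem (Iic α) z b le_rfl]⟩

theorem stmt_12_general (μ lam : Ordinal)
    (x z : Set.Iio μ → Set.Iio lam)
    (hxz : Pi.Lex (· < ·) (fun {_} => (· < ·)) x z) :
    ∃ y : Set.Iio μ → Set.Iio lam,
      (∃ α : Set.Iio μ, ∀ β : Set.Iio μ, α < β → (y β : Ordinal) = 0) ∧
      Pi.Lex (· < ·) (fun {_} => (· < ·)) x y ∧
      (Pi.Lex (· < ·) (fun {_} => (· < ·)) y z ∨ y = z) := by
  obtain ⟨α, hagree, hlt⟩ := hxz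
  let zero : Iio lam := ⟨0, mem_Iio.2 <| zero_le.trans_lt (z α).2⟩
  have zero_le_apply : ∀ a, zero ≤ a := fun _ => Subtype.coe_le_coe.1 zero_le
  refine ⟨(Iic α).piecewise z fun _ => zero, ⟨α, fun β hβ => ?_⟩,
    Pi.lt_toLex_piecewise_Iic hagree hlt, ?_⟩
  · rw [piecewise_eq_of_notMem (Iic α) z _ (not_le.2 hβ)]
  · exact le_iff_lt_or_eq.1 <| Pi.toLex_monotone <|
      piecewise_le (fun _ _ => le_rfl) fun i _ => zero_le_apply (z i)

theorem stmt_12 (μ lam : Ordinal) (hlam : 2 ≤ lam)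
    (x z : Set.Iio μ → Set.Iio lam)
    (hxz : Pi.Lex (· < ·) (fun {_} => (· < ·)) x z) :
    ∃ y : Set.Iio μ → Set.Iio lam,
      (∃ α : Set.Iio μ, ∀ β : Set.Iio μ, α < β → (y β : Ordinal) = 0) ∧
      Pi.Lex (· < ·) (fun {_} => (· < ·)) x y ∧
      (Pi.Lex (· < ·) (fun {_} => (· < ·)) y z ∨ y = z) :=
  stmt_12_general μ lam x z hxz
end

section
/- Let L be a linear order and D ⊆ L a subset such that for all a < b in L there exists d ∈ D with a < d < b (D is dense in L). Then the cardinality of L is at most 2^{|D|}. -/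
/-! A point `x` of `L` is determined by its lower cut `{d ∈ D | d < x}` in the dense set `D`:
between two distinct points lies an element of `D` separating their cuts. Hence `L` injects
into the power set of `D`. -/

theorem strictMono_setOf_lt_of_dense {L : Type*} [LinearOrder L] {D : Set L}
    (hD : ∀ a b : L, a < b → ∃ d ∈ D, a < d ∧ d < b) :
    StrictMono fun x : L => {d : D | (d : L) < x} := by
  intro x y hxy
  refine lt_of_le_of_ne (fun d (hdx : (d : L) < x) => hdx.trans hxy) fun hcut => ?_
  obtain ⟨d, hd, hxd, hdy⟩ := hD x y hxy
  have hd_mem : (⟨d, hd⟩ : D) ∈ {d : D | (d : L) < x} := by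
    simp only at hcut
    exact hcut ▸ hdy
  exact hxd.not_gt hd_mem

theorem stmt_13 {L : Type*} [LinearOrder L] (D : Set L)
    (hD : ∀ a b : L, a < b → ∃ d ∈ D, a < d ∧ d < b) :
    Cardinal.mk L ≤ 2 ^ Cardinal.mk D :=
  calc Cardinal.mk L ≤ Cardinal.mk (Set D) :=
        Cardinal.mk_le_of_injective (strictMono_setOf_lt_of_dense hD).injective
    _ = 2 ^ Cardinal.mk D := Cardinal.mk_set
end
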